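/- arXiv:math/0610582 — 4 statements merged into one kernel-verified Lean document; each statement's English description precedes it below -/
import Mathlib

section
/- If S ⊆ ℕ is multiplicative and Σ_{p prime, p ∉ S} 1/p < ∞, then the series Σ_{n=1}^∞ |μ*_S(n)| θ(n)/n converges. In particular, Σ_p Σ_{a≥1} |μ*_S(p^a)| θ(p^a)/p^a ≤ 4(Σ_{p∈S} 1/p² + Σ_{p∉S} 1/p). -/
def udivisors (n : ℕ) : Finset ℕ := n.divisors.filter fun d => Nat.gcd d (n / d) = 1

def mustar (n : ℕ) : ℤ := (-1) ^ n.primeFactors.card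

def rhoR (S : Set ℕ) [DecidablePred (· ∈ S)] (n : ℕ) : ℝ := if n ∈ S then 1 else 0

/-- real-valued `μ*_S` -/
def mustarSR (S : Set ℕ) [DecidablePred (· ∈ S)] (n : ℕ) : ℝ :=
  ∑ d ∈ udivisors n, rhoR S d * (mustar (n / d) : ℝ)

def theta (n : ℕ) : ℕ := 2 ^ n.primeFactors.card


/-!
The weight `w(n) = |μ*_S(n)| θ(n) / n` is multiplicative: `μ*_S` is the unitary convolution of
the multiplicative functions `ρ_S` and `μ*`, and unitary divisors of a product of coprime numbers
are exactly the products of their unitary divisors. At a prime power, `μ*_S(p^a) = ρ_S(p^a) - 1`,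
so `w(p^a)` is `2 / p^a` if `p^a ∉ S` and `0` otherwise. Hence the local sum
`Σ_{a ≥ 1} w(p^a)` is at most `(2/p) Σ p^{-a} ≤ 4/p`, and at most `4/p²` when `p ∈ S` (then
`w(p) = 0`), which gives the stated bound. Finally, by the Euler product every partial sum of
`w` is at most `∏_p (1 + Σ_{a ≥ 1} w(p^a)) ≤ exp (Σ_p Σ_{a ≥ 1} w(p^a))`.
-/

theorem sum_udivisors_mul_of_coprime {R : Type*} [CommSemiring R] {g h : ℕ → R}
    (hg : ∀ {a b : ℕ}, a.Coprime b → g (a * b) = g a * g b)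
    (hh : ∀ {a b : ℕ}, a.Coprime b → h (a * b) = h a * h b) {m n : ℕ} (hmn : m.Coprime n) :
    ∑ d ∈ udivisors (m * n), g d * h (m * n / d) =
      (∑ d ∈ udivisors m, g d * h (m / d)) * ∑ d ∈ udivisors n, g d * h (n / d) := by
  simp only [udivisors, Finset.sum_filter, Nat.divisors_mul, Finset.mul_def,
    Finset.sum_image hmn.mul_injOn_divisors, Finset.sum_mul_sum, ← Finset.sum_product']
  refine Finset.sum_congr rfl ?_
  rintro ⟨d₁, d₂⟩ hd
  obtain ⟨⟨hd₁, -⟩, ⟨hd₂, -⟩⟩ : (d₁ ∣ m ∧ m ≠ 0) ∧ (d₂ ∣ n ∧ n ≠ 0) := by simpa using hd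
  have hq₁ : m / d₁ ∣ m := Nat.div_dvd_of_dvd hd₁
  have hq₂ : n / d₂ ∣ n := Nat.div_dvd_of_dvd hd₂
  have hunitary : (d₁ * d₂).Coprime (m / d₁ * (n / d₂)) ↔
      d₁.Coprime (m / d₁) ∧ d₂.Coprime (n / d₂) := by
    have h₁₂ : d₁.Coprime (n / d₂) := (hmn.coprime_dvd_left hd₁).coprime_dvd_right hq₂
    have h₂₁ : d₂.Coprime (m / d₁) := ((hmn.coprime_dvd_left hq₁).coprime_dvd_right hd₂).symm
    rw [Nat.coprime_mul_iff_left, Nat.coprime_mul_iff_right, Nat.coprime_mul_iff_right]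
    tauto
  rw [← Nat.div_mul_div_comm hd₁ hd₂]
  simp only [← Nat.coprime_iff_gcd_eq_one, hunitary, ite_zero_mul_ite_zero]
  refine if_congr Iff.rfl ?_ rfl
  rw [hg ((hmn.coprime_dvd_left hd₁).coprime_dvd_right hd₂),
    hh ((hmn.coprime_dvd_left hq₁).coprime_dvd_right hq₂), mul_mul_mul_comm]

theorem udivisors_prime_pow {p : ℕ} (hp : p.Prime) (a : ℕ) :
    udivisors (p ^ a) = {1, p ^ a} := by
  ext d
  simp only [udivisors, Nat.divisors_prime_pow hp, Finset.mem_filter, Finset.mem_map,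
    Finset.mem_range, Function.Embedding.coeFn_mk, Finset.mem_insert, Finset.mem_singleton]
  constructor
  · rintro ⟨⟨i, hi, rfl⟩, hcop⟩
    rw [Nat.pow_div (by omega) hp.pos] at hcop
    rcases Nat.eq_zero_or_pos i with rfl | hi₀
    · exact Or.inl (pow_zero p)
    rcases Nat.eq_zero_or_pos (a - i) with hai | hai
    · exact Or.inr (by rw [show i = a by omega])
    have hpp : p.Coprime p := (Nat.Coprime.coprime_dvd_left (dvd_pow_self p hi₀.ne') hcop)
      |>.coprime_dvd_right (dvd_pow_self p hai.ne')
    exact absurd ((Nat.coprime_self p).mp hpp) hp.one_lt.ne'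
  · rintro (rfl | rfl)
    · exact ⟨⟨0, by omega, pow_zero p⟩, Nat.gcd_one_left _⟩
    · exact ⟨⟨a, by omega, rfl⟩, by simp [Nat.div_self (pow_pos hp.pos a)]⟩

theorem Nat.Coprime.card_primeFactors_mul {m n : ℕ} (hmn : m.Coprime n) :
    (m * n).primeFactors.card = m.primeFactors.card + n.primeFactors.card := by
  rw [hmn.primeFactors_mul, Finset.card_union_of_disjoint hmn.disjoint_primeFactors]

theorem Nat.card_primeFactors_prime_pow {p a : ℕ} (hp : p.Prime) (ha : a ≠ 0) :
    (p ^ a).primeFactors.card = 1 := by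
  rw [Nat.primeFactors_prime_pow ha hp, Finset.card_singleton]

theorem mustar_mul_of_coprime {m n : ℕ} (hmn : m.Coprime n) :
    mustar (m * n) = mustar m * mustar n := by
  rw [mustar, mustar, mustar, hmn.card_primeFactors_mul, pow_add]

theorem theta_mul_of_coprime {m n : ℕ} (hmn : m.Coprime n) :
    theta (m * n) = theta m * theta n := by
  rw [theta, theta, theta, hmn.card_primeFactors_mul, pow_add]

theorem mustar_prime_pow {p a : ℕ} (hp : p.Prime) (ha : a ≠ 0) : mustar (p ^ a) = -1 := by
  rw [mustar, Nat.card_primeFactors_prime_pow hp ha, pow_one]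

theorem theta_prime_pow {p a : ℕ} (hp : p.Prime) (ha : a ≠ 0) : theta (p ^ a) = 2 := by
  rw [theta, Nat.card_primeFactors_prime_pow hp ha, pow_one]

theorem sum_primesBelow_le_tsum {t : ℕ → ℝ} (ht₀ : ∀ p, 0 ≤ t p)
    (ht : Summable fun p : Nat.Primes => t p) (N : ℕ) :
    ∑ p ∈ N.primesBelow, t p ≤ ∑' p : Nat.Primes, t p := by
  rw [← Finset.sum_subtype_of_mem t (p := Nat.Prime) fun p => Nat.prime_of_mem_primesBelow]
  exact Summable.sum_le_tsum (f := fun p : Nat.Primes => t p) _ (fun p _ => ht₀ p) ht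

theorem prod_primesBelow_tsum_le_exp {f : ℕ → ℝ} (hf₀ : ∀ n, 0 ≤ f n) (hf₁ : f 1 = 1)
    (hpow : ∀ p : ℕ, p.Prime → Summable fun a => f (p ^ (a + 1)))
    (hprimes : Summable fun p : Nat.Primes => ∑' a, f ((p : ℕ) ^ (a + 1))) (N : ℕ) :
    ∏ p ∈ N.primesBelow, ∑' a, f (p ^ a) ≤
      Real.exp (∑' p : Nat.Primes, ∑' a, f ((p : ℕ) ^ (a + 1))) := by
  calc ∏ p ∈ N.primesBelow, ∑' a, f (p ^ a)
      ≤ ∏ p ∈ N.primesBelow, Real.exp (∑' a, f (p ^ (a + 1))) := by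
        refine Finset.prod_le_prod (fun p _ => tsum_nonneg fun a => hf₀ _) fun p hp => ?_
        have hsum := (summable_nat_add_iff (f := fun a => f (p ^ a)) 1).mp
          (hpow p (Nat.prime_of_mem_primesBelow hp))
        rw [hsum.tsum_eq_zero_add, pow_zero, hf₁, add_comm]
        exact Real.add_one_le_exp _
    _ = Real.exp (∑ p ∈ N.primesBelow, ∑' a, f (p ^ (a + 1))) :=
        (Real.exp_sum N.primesBelow fun p => ∑' a, f (p ^ (a + 1))).symm
    _ ≤ _ := by
        gcongr
        exact sum_primesBelow_le_tsum (t := fun p => ∑' a, f (p ^ (a + 1)))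
          (fun p => tsum_nonneg fun a => hf₀ _) hprimes N

theorem summable_of_summable_tsum_prime_pow {f : ℕ → ℝ} (hf₀ : ∀ n, 0 ≤ f n) (hf₁ : f 1 = 1)
    (hmul : ∀ {m n : ℕ}, m.Coprime n → f (m * n) = f m * f n)
    (hpow : ∀ p : ℕ, p.Prime → Summable fun a => f (p ^ (a + 1)))
    (hprimes : Summable fun p : Nat.Primes => ∑' a, f ((p : ℕ) ^ (a + 1))) :
    Summable fun n => f (n + 1) := by
  refine summable_of_sum_range_le
    (c := Real.exp (∑' p : Nat.Primes, ∑' a, f ((p : ℕ) ^ (a + 1)))) (fun n => hf₀ _) fun N => ?_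
  have hsmooth := (EulerProduct.summable_and_hasSum_smoothNumbers_prod_primesBelow_tsum hf₁ hmul
    (fun hp => ((summable_nat_add_iff (f := fun a => f (_ ^ a)) 1).mp (hpow _ hp)).congr
      fun a => (Real.norm_of_nonneg (hf₀ _)).symm) (N + 1)).2
  have hmem : ∀ m ∈ Finset.Ico 1 (N + 1), m ∈ Nat.smoothNumbers (N + 1) := by
    intro m hm
    rw [Finset.mem_Ico] at hm
    exact Nat.mem_smoothNumbers_of_lt (by omega) hm.2
  calc ∑ k ∈ Finset.range N, f (k + 1) = ∑ m ∈ Finset.Ico 1 (N + 1), f m := by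
        rw [Finset.range_eq_Ico, Finset.sum_Ico_add']
    _ = ∑ m ∈ (Finset.Ico 1 (N + 1)).subtype (· ∈ Nat.smoothNumbers (N + 1)), f m :=
        (Finset.sum_subtype_of_mem f hmem).symm
    _ ≤ ∏ p ∈ (N + 1).primesBelow, ∑' a, f (p ^ a) :=
        sum_le_hasSum _ (fun m _ => hf₀ m) hsmooth
    _ ≤ _ := prod_primesBelow_tsum_le_exp hf₀ hf₁ hpow hprimes _

theorem tsum_inv_pow_le_two {x : ℝ} (hx : 2 ≤ x) : ∑' n : ℕ, x⁻¹ ^ n ≤ 2 := by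
  have h₀ : 0 ≤ x⁻¹ := by positivity
  have hle : x⁻¹ ≤ 2⁻¹ := inv_anti₀ two_pos hx
  calc ∑' n : ℕ, x⁻¹ ^ n ≤ ∑' n : ℕ, (2 : ℝ)⁻¹ ^ n :=
        (summable_geometric_of_lt_one h₀ (hle.trans_lt (by norm_num))).tsum_le_tsum
          (fun n => pow_le_pow_left₀ h₀ hle n)
          (summable_geometric_of_lt_one (by norm_num) (by norm_num))
    _ = 2 := tsum_geometric_inv_two

section
variable (S : Set ℕ) [DecidablePred (· ∈ S)]

theorem rhoR_mul_of_coprime (h1 : 1 ∈ S)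
    (hmul : ∀ m n : ℕ, 0 < m → 0 < n → Nat.Coprime m n → (m * n ∈ S ↔ m ∈ S ∧ n ∈ S))
    {m n : ℕ} (hmn : m.Coprime n) : rhoR S (m * n) = rhoR S m * rhoR S n := by
  rcases Nat.eq_zero_or_pos m with rfl | hm
  · simp [(Nat.coprime_zero_left n).mp hmn, rhoR, h1]
  rcases Nat.eq_zero_or_pos n with rfl | hn
  · simp [(Nat.coprime_zero_right m).mp hmn, rhoR, h1]
  by_cases hmS : m ∈ S <;> by_cases hnS : n ∈ S <;> simp [rhoR, hmul m n hm hn hmn, hmS, hnS]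

theorem mustarSR_mul_of_coprime (h1 : 1 ∈ S)
    (hmul : ∀ m n : ℕ, 0 < m → 0 < n → Nat.Coprime m n → (m * n ∈ S ↔ m ∈ S ∧ n ∈ S))
    {m n : ℕ} (hmn : m.Coprime n) : mustarSR S (m * n) = mustarSR S m * mustarSR S n :=
  sum_udivisors_mul_of_coprime (h := fun k => (mustar k : ℝ)) (rhoR_mul_of_coprime S h1 hmul)
    (fun hab => by rw [mustar_mul_of_coprime hab, Int.cast_mul]) hmn

theorem mustarSR_one (h1 : 1 ∈ S) : mustarSR S 1 = 1 := by
  simp [mustarSR, show udivisors 1 = {1} by decide, rhoR, h1, mustar]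

theorem mustarSR_prime_pow (h1 : 1 ∈ S) {p a : ℕ} (hp : p.Prime) (ha : a ≠ 0) :
    mustarSR S (p ^ a) = rhoR S (p ^ a) - 1 := by
  have hne : 1 ≠ p ^ a := (Nat.one_lt_pow ha hp.one_lt).ne
  rw [mustarSR, udivisors_prime_pow hp a, Finset.sum_pair hne, Nat.div_one,
    Nat.div_self (pow_pos hp.pos a), mustar_prime_pow hp ha]
  simp [rhoR, h1, mustar]
  ring

noncomputable def mustarWeight (n : ℕ) : ℝ := |mustarSR S n| * theta n / n

theorem mustarWeight_nonneg (n : ℕ) : 0 ≤ mustarWeight S n := by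
  unfold mustarWeight
  positivity

theorem mustarWeight_one (h1 : 1 ∈ S) : mustarWeight S 1 = 1 := by
  simp [mustarWeight, mustarSR_one S h1, theta]

theorem mustarWeight_mul_of_coprime (h1 : 1 ∈ S)
    (hmul : ∀ m n : ℕ, 0 < m → 0 < n → Nat.Coprime m n → (m * n ∈ S ↔ m ∈ S ∧ n ∈ S))
    {m n : ℕ} (hmn : m.Coprime n) :
    mustarWeight S (m * n) = mustarWeight S m * mustarWeight S n := by
  rw [mustarWeight, mustarSR_mul_of_coprime S h1 hmul hmn, theta_mul_of_coprime hmn, abs_mul,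
    Nat.cast_mul, Nat.cast_mul, mul_mul_mul_comm, mul_div_mul_comm]
  rfl

theorem mustarWeight_prime_pow (h1 : 1 ∈ S) {p a : ℕ} (hp : p.Prime) (ha : a ≠ 0) :
    mustarWeight S (p ^ a) = if p ^ a ∈ S then 0 else 2 / (p : ℝ) ^ a := by
  rw [mustarWeight, mustarSR_prime_pow S h1 hp ha, theta_prime_pow hp ha, rhoR]
  split_ifs <;> simp

theorem mustarWeight_prime_pow_add_le (h1 : 1 ∈ S) {p : ℕ} (hp : p.Prime) (a : ℕ) {k : ℕ}
    (hk : k ≠ 0) : mustarWeight S (p ^ (a + k)) ≤ 2 / (p : ℝ) ^ k * (p : ℝ)⁻¹ ^ a := by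
  rw [mustarWeight_prime_pow S h1 hp (by omega), div_mul_eq_mul_div, inv_pow, ← div_eq_mul_inv,
    div_div, ← pow_add]
  split_ifs
  · positivity
  · exact le_rfl

theorem summable_mustarWeight_prime_pow_add (h1 : 1 ∈ S) {p : ℕ} (hp : p.Prime) {k : ℕ}
    (hk : k ≠ 0) : Summable fun a => mustarWeight S (p ^ (a + k)) :=
  Summable.of_nonneg_of_le (fun a => mustarWeight_nonneg S _)
    (fun a => mustarWeight_prime_pow_add_le S h1 hp a hk)
    ((summable_geometric_of_lt_one (by positivity)
      (inv_lt_one_of_one_lt₀ (by exact_mod_cast hp.one_lt))).mul_left _)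

theorem tsum_mustarWeight_prime_pow_add_le (h1 : 1 ∈ S) {p : ℕ} (hp : p.Prime) {k : ℕ}
    (hk : k ≠ 0) : ∑' a, mustarWeight S (p ^ (a + k)) ≤ 4 / (p : ℝ) ^ k := by
  have hgeom : Summable fun a : ℕ => (p : ℝ)⁻¹ ^ a := summable_geometric_of_lt_one
    (by positivity) (inv_lt_one_of_one_lt₀ (by exact_mod_cast hp.one_lt))
  calc ∑' a, mustarWeight S (p ^ (a + k)) ≤ ∑' a : ℕ, 2 / (p : ℝ) ^ k * (p : ℝ)⁻¹ ^ a :=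
        (summable_mustarWeight_prime_pow_add S h1 hp hk).tsum_le_tsum
          (fun a => mustarWeight_prime_pow_add_le S h1 hp a hk) (hgeom.mul_left _)
    _ = 2 / (p : ℝ) ^ k * ∑' a : ℕ, (p : ℝ)⁻¹ ^ a := tsum_mul_left
    _ ≤ 2 / (p : ℝ) ^ k * 2 := by
        gcongr
        exact tsum_inv_pow_le_two (by exact_mod_cast hp.two_le)
    _ = 4 / (p : ℝ) ^ k := by ring

theorem tsum_mustarWeight_prime_pow_succ_le (h1 : 1 ∈ S) {p : ℕ} (hp : p.Prime) :
    ∑' a, mustarWeight S (p ^ (a + 1)) ≤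
      4 * if p ∈ S then 1 / (p : ℝ) ^ 2 else 1 / (p : ℝ) := by
  split_ifs with hpS
  · have hp₁ : mustarWeight S (p ^ (0 + 1)) = 0 := by
      rw [zero_add, mustarWeight_prime_pow S h1 hp one_ne_zero, if_pos (by rwa [pow_one])]
    rw [(summable_mustarWeight_prime_pow_add S h1 hp one_ne_zero).tsum_eq_zero_add, hp₁, zero_add]
    simpa only [add_assoc, one_add_one_eq_two, mul_one_div]
      using tsum_mustarWeight_prime_pow_add_le S h1 hp two_ne_zero
  · simpa only [pow_one, mul_one_div] using tsum_mustarWeight_prime_pow_add_le S h1 hp one_ne_zero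

theorem hasSum_one_div_sq_or_one_div
    (hp : Summable fun p : {p : Nat.Primes // (p : ℕ) ∉ S} => (1 : ℝ) / ((p.1 : ℕ) : ℝ)) :
    HasSum (fun p : Nat.Primes => if (p : ℕ) ∈ S then 1 / ((p : ℕ) : ℝ) ^ 2 else 1 / ((p : ℕ) : ℝ))
      ((∑' p : {p : Nat.Primes // (p : ℕ) ∈ S}, (1 : ℝ) / ((p.1 : ℕ) : ℝ) ^ 2)
        + ∑' p : {p : Nat.Primes // (p : ℕ) ∉ S}, (1 : ℝ) / ((p.1 : ℕ) : ℝ)) := by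
  have hsq : Summable fun p : Nat.Primes => 1 / ((p : ℕ) : ℝ) ^ 2 :=
    (Real.summable_one_div_nat_pow.mpr one_lt_two).comp_injective Nat.Primes.coe_nat_injective
  refine HasSum.add_isCompl (s := {p | (p : ℕ) ∈ S}) (t := {p | (p : ℕ) ∉ S}) isCompl_compl ?_ ?_
  · exact (hsq.subtype _).hasSum.congr_fun fun p => if_pos p.2
  · exact hp.hasSum.congr_fun fun p => if_neg p.2

end

theorem stmt10 (S : Set ℕ) [DecidablePred (· ∈ S)]
    (h1 : 1 ∈ S)
    (hmul : ∀ m n : ℕ, 0 < m → 0 < n → Nat.Coprime m n → (m * n ∈ S ↔ m ∈ S ∧ n ∈ S))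
    (hp : Summable fun p : {p : Nat.Primes // (p : ℕ) ∉ S} => (1 : ℝ) / ((p.1 : ℕ) : ℝ)) :
    Summable (fun n : ℕ => |mustarSR S (n + 1)| * (theta (n + 1) : ℝ) / ((n + 1 : ℕ) : ℝ)) ∧
    ∑' (p : Nat.Primes) (a : ℕ),
        |mustarSR S ((p : ℕ) ^ (a + 1))| * (theta ((p : ℕ) ^ (a + 1)) : ℝ)
          / (((p : ℕ) : ℝ) ^ (a + 1))
      ≤ 4 * ((∑' p : {p : Nat.Primes // (p : ℕ) ∈ S}, (1 : ℝ) / ((p.1 : ℕ) : ℝ) ^ 2)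
          + ∑' p : {p : Nat.Primes // (p : ℕ) ∉ S}, (1 : ℝ) / ((p.1 : ℕ) : ℝ)) := by
  have hbound := hasSum_one_div_sq_or_one_div S hp
  have hlocal : ∀ p : Nat.Primes, ∑' a, mustarWeight S ((p : ℕ) ^ (a + 1)) ≤
      4 * if (p : ℕ) ∈ S then 1 / ((p : ℕ) : ℝ) ^ 2 else 1 / ((p : ℕ) : ℝ) :=
    fun p => tsum_mustarWeight_prime_pow_succ_le S h1 p.2
  have hprimes : Summable fun p : Nat.Primes => ∑' a, mustarWeight S ((p : ℕ) ^ (a + 1)) :=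
    (hbound.summable.mul_left 4).of_nonneg_of_le
      (fun p => tsum_nonneg fun a => mustarWeight_nonneg S _) hlocal
  refine ⟨summable_of_summable_tsum_prime_pow (mustarWeight_nonneg S) (mustarWeight_one S h1)
    (mustarWeight_mul_of_coprime S h1 hmul)
    (fun p hp => summable_mustarWeight_prime_pow_add S h1 hp one_ne_zero) hprimes, ?_⟩
  calc _ = ∑' (p : Nat.Primes) (a : ℕ), mustarWeight S ((p : ℕ) ^ (a + 1)) := by
        simp only [mustarWeight, Nat.cast_pow]
    _ ≤ ∑' p : Nat.Primes, 4 * if (p : ℕ) ∈ S then 1 / ((p : ℕ) : ℝ) ^ 2 else 1 / ((p : ℕ) : ℝ) :=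
        hprimes.tsum_le_tsum hlocal (hbound.summable.mul_left 4)
    _ = _ := by rw [tsum_mul_left, hbound.tsum_eq]
end

section
/- Let δ_k = ∏_p (1 − (p−1)^k/(p^k(p^k−1))) and p_n the n-th prime. For N ≥ 5, the tail R_N = −log ∏_{n>N}(1 − (p_n−1)^k/(p_n^k(p_n^k−1))) satisfies R_N < 1/(2(2N+1)). -/
/-!
Each Euler factor `1 - x_p` with `x_p = (p - 1)^k / (p^k (p^k - 1))` has `0 ≤ x_p ≤ p^{-k}`,
hence `-log (1 - x_p) ≤ log (p^k / (p^k - 1)) ≤ 1 / (p^k - 1) ≤ 1 / (p² - 1)`.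
For `n ≥ 4` the (0-indexed) `n`-th prime is at least `2n + 3`, so the tail is dominated by
`∑_{j > N} 1 / ((2j + 1)² - 1) = ∑_{j > N} 1 / (4 j (j + 1)) = 1 / (4 (N + 1)) < 1 / (2 (2N + 1))`.
-/

open Real

theorem Nat.two_mul_add_three_le_nth_prime {n : ℕ} (hn : 4 ≤ n) :
    2 * n + 3 ≤ Nat.nth Nat.Prime n := by
  induction n, hn using Nat.le_induction with
  | base => simp [Nat.nth_prime_four_eq_eleven]
  | succ n hn ih =>
    have hlt : Nat.nth Nat.Prime n < Nat.nth Nat.Prime (n + 1) :=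
      Nat.nth_strictMono Nat.infinite_setOfPred_prime n.lt_succ_self
    -- consecutive odd primes differ by at least 2
    obtain ⟨a, ha⟩ := (Nat.prime_nth_prime n).odd_of_ne_two (by omega)
    obtain ⟨b, hb⟩ := (Nat.prime_nth_prime (n + 1)).odd_of_ne_two (by omega)
    omega

theorem hasSum_one_div_mul_add_one {c : ℝ} (hc : 0 < c) :
    HasSum (fun m : ℕ => 1 / ((c + m) * (c + m + 1))) (1 / c) := by
  have htel : ∀ m : ℕ, 1 / ((c + m) * (c + m + 1)) = 1 / (c + m) - 1 / (c + (m + 1 : ℕ)) := by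
    intro m
    have : 0 < c + m := by positivity
    push_cast
    field_simp
    ring
  refine (hasSum_iff_tendsto_nat_of_nonneg (fun m => by positivity) _).2 ?_
  simp_rw [htel, Finset.sum_range_sub', Nat.cast_zero, add_zero]
  have hlim : Filter.Tendsto (fun n : ℕ => 1 / (c + n)) Filter.atTop (nhds 0) := by
    simpa only [one_div, Pi.inv_def] using
      (Filter.tendsto_atTop_add_const_left _ c tendsto_natCast_atTop_atTop).inv_tendsto_atTop
  simpa using hlim.const_sub (1 / c)

theorem neg_log_one_sub_le_one_div_sub_one {x q : ℝ} (hq : 1 < q) (hx : x ≤ 1 / q) :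
    -log (1 - x) ≤ 1 / (q - 1) := by
  have hq0 : 0 < q := by linarith
  have hx1 : 0 < 1 - x := by
    have : 1 / q < 1 := (div_lt_one hq0).2 hq
    linarith
  calc -log (1 - x) = log (1 - x)⁻¹ := (log_inv _).symm
    _ ≤ (1 - x)⁻¹ - 1 := log_le_sub_one_of_pos (inv_pos.2 hx1)
    _ ≤ 1 / (q - 1) := by
      rw [le_div_iff₀ hq0] at hx
      rw [inv_eq_one_div, div_sub_one hx1.ne', div_le_div_iff₀ hx1 (by linarith)]
      nlinarith

section EulerFactor

variable {k : ℕ} {P : ℝ}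

theorem eulerTerm_le_one_div_pow (hk : k ≠ 0) (hP : 1 < P) :
    (P - 1) ^ k / (P ^ k * (P ^ k - 1)) ≤ 1 / P ^ k := by
  have hPk : 1 < P ^ k := one_lt_pow₀ hP hk
  have hnum : (P - 1) ^ k ≤ P ^ k - 1 := by
    have := pow_add_pow_le (sub_nonneg.2 hP.le) zero_le_one hk
    rw [one_pow, sub_add_cancel] at this
    linarith
  calc (P - 1) ^ k / (P ^ k * (P ^ k - 1))
      ≤ (P ^ k - 1) / (P ^ k * (P ^ k - 1)) := by gcongr
    _ = 1 / P ^ k := by field_simp [(sub_pos.2 hPk).ne']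

theorem eulerFactor_pos (hk : k ≠ 0) (hP : 1 < P) :
    0 < 1 - (P - 1) ^ k / (P ^ k * (P ^ k - 1)) := by
  have hPk : 1 / P ^ k < 1 := (div_lt_one (by positivity)).2 (one_lt_pow₀ hP hk)
  linarith [eulerTerm_le_one_div_pow hk hP]

theorem eulerFactor_le_one (hP : 1 ≤ P) : 1 - (P - 1) ^ k / (P ^ k * (P ^ k - 1)) ≤ 1 := by
  have : 1 ≤ P ^ k := one_le_pow₀ hP
  have : 0 ≤ P - 1 := by linarith
  have : 0 ≤ (P - 1) ^ k / (P ^ k * (P ^ k - 1)) := by positivity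
  linarith

theorem neg_log_eulerFactor_le (hk : 2 ≤ k) (hP : 1 < P) :
    -log (1 - (P - 1) ^ k / (P ^ k * (P ^ k - 1))) ≤ 1 / (P ^ 2 - 1) := by
  have hPk : 1 < P ^ k := one_lt_pow₀ hP (by omega)
  calc _ ≤ 1 / (P ^ k - 1) :=
        neg_log_one_sub_le_one_div_sub_one hPk (eulerTerm_le_one_div_pow (by omega) hP)
    _ ≤ 1 / (P ^ 2 - 1) := by
      have : 1 < P ^ 2 := one_lt_pow₀ hP two_ne_zero
      gcongr
      · linarith
end EulerFactor
theorem neg_log_tprod_le_of_hasSum {ι : Type*} {a b : ι → ℝ} {B : ℝ} (ha : ∀ i, 0 < a i)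
    (ha₁ : ∀ i, a i ≤ 1) (hab : ∀ i, -log (a i) ≤ b i) (hb : HasSum b B) :
    -log (∏' i, a i) ≤ B := by
  have hnn : ∀ i, 0 ≤ -log (a i) := fun i => neg_nonneg.2 (log_nonpos (ha i).le (ha₁ i))
  have hs : Summable fun i => -log (a i) := hb.summable.of_nonneg_of_le hnn hab
  rw [← rexp_tsum_eq_tprod ha (by simpa using hs.neg), log_exp, ← tsum_neg]
  exact hasSum_le hab hs.hasSum hb

theorem stmt14 (k N : ℕ) (hk : 2 ≤ k) (hN : 5 ≤ N) :
    -Real.log (∏' m : ℕ,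
        (1 - ((Nat.nth Nat.Prime (N + m) : ℝ) - 1) ^ k /
          ((Nat.nth Nat.Prime (N + m) : ℝ) ^ k * ((Nat.nth Nat.Prime (N + m) : ℝ) ^ k - 1))))
      < 1 / (2 * (2 * (N : ℝ) + 1)) := by
  set p : ℕ → ℝ := fun m => Nat.nth Nat.Prime (N + m)
  have hp : ∀ m : ℕ, 2 * (N + 1 + m : ℝ) + 1 ≤ p m := fun m => by
    have : ((2 * (N + m) + 3 : ℕ) : ℝ) ≤ p m :=
      Nat.cast_le.2 (Nat.two_mul_add_three_le_nth_prime (by omega))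
    push_cast at this
    linarith
  have hp₁ : ∀ m, 1 < p m := fun m => by linarith [hp m, (Nat.cast_nonneg m : (0 : ℝ) ≤ m)]
  have hsum := (hasSum_one_div_mul_add_one (c := (N + 1 : ℝ)) (by positivity)).mul_left (1 / 4)
  refine (neg_log_tprod_le_of_hasSum (fun m => eulerFactor_pos (by omega) (hp₁ m))
    (fun m => eulerFactor_le_one (hp₁ m).le) (fun m => ?_) hsum).trans_lt ?_
  · refine (neg_log_eulerFactor_le hk (hp₁ m)).trans ?_
    rw [one_div_mul_one_div, ← show (2 * (N + 1 + m : ℝ) + 1) ^ 2 - 1 = 4 * _ by ring]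
    have := hp m
    gcongr
    nlinarith [(Nat.cast_nonneg m : (0 : ℝ) ≤ m)]
  · rw [one_div_mul_one_div, one_div_lt_one_div (by positivity) (by positivity)]
    linarith
end

section
/- Let S ⊆ ℕ be multiplicative and suppose that for every prime p, min{a ≥ 1 : p^a ∉ S} ≥ r for some fixed integer r ≥ 2 (i.e. p, p², ..., p^{r−1} ∈ S for all primes p). Define μ_S(n) = Σ_{d|n} ρ_S(d) μ(n/d). Then μ_S is multiplicative, μ_S(p^a) = ρ_S(p^a) − ρ_S(p^{a−1}), μ_S(p) = ... = μ_S(p^{r−1}) = 0 for every prime p, and |μ_S(n)| ≤ ρ_{L_r}(n) for every n, where L_r is the set of r-full numbers. -/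
def rho (S : Set ℕ) [DecidablePred (· ∈ S)] (n : ℕ) : ℤ := if n ∈ S then 1 else 0

/-- `μ_S(n) = Σ_{d | n} ρ_S(d) μ(n/d)` -/
def muS (S : Set ℕ) [DecidablePred (· ∈ S)] (n : ℕ) : ℤ :=
  ∑ d ∈ n.divisors, rho S d * (ArithmeticFunction.moebius (n / d))

/-- `n` is `r`-full: every prime dividing `n` does so to the power at least `r` -/
def IsRFull (r n : ℕ) : Prop := ∀ p ∈ n.primeFactors, p ^ r ∣ n

instance (r n : ℕ) : Decidable (IsRFull r n) := by unfold IsRFull; infer_instance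

/-- characteristic function of the `r`-full numbers -/
def rhoL (r n : ℕ) : ℤ := if IsRFull r n then 1 else 0

/-!
`μ_S = ρ_S * μ` is a Dirichlet convolution of multiplicative functions, hence multiplicative,
and its value at `p^a` telescopes to `ρ_S(p^a) - ρ_S(p^(a-1))` because `μ` vanishes on higher
prime powers. This is `0` whenever `p^a` and `p^(a-1)` both lie in `S`, in particular for
`1 ≤ a < r`, and has absolute value at most `1` in general. Multiplicativity then gives
`|μ_S(n)| ≤ 1`, and `μ_S(n) = 0` as soon as some prime occurs in `n` to an exponent below `r`,
that is, unless `n` is `r`-full.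
-/

open ArithmeticFunction Finset
open scoped ArithmeticFunction.Moebius

theorem isRFull_iff_le_factorization {r n : ℕ} (hn : n ≠ 0) :
    IsRFull r n ↔ ∀ p ∈ n.primeFactors, r ≤ n.factorization p :=
  forall₂_congr fun _ hp => (Nat.prime_of_mem_primeFactors hp).pow_dvd_iff_le_factorization hn

theorem abs_le_rhoL_of_multiplicative {f : ℕ → ℤ}
    (hmul : ∀ m n : ℕ, Nat.Coprime m n → f (m * n) = f m * f n) (hone : f 1 = 1) {r : ℕ}
    (hle : ∀ p a : ℕ, p.Prime → 1 ≤ a → |f (p ^ a)| ≤ 1)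
    (hzero : ∀ p a : ℕ, p.Prime → 1 ≤ a → a < r → f (p ^ a) = 0) {n : ℕ} (hn : n ≠ 0) :
    |f n| ≤ rhoL r n := by
  have hpos : ∀ p ∈ n.primeFactors, 1 ≤ n.factorization p := fun p hp =>
    Nat.one_le_iff_ne_zero.2 (Finsupp.mem_support_iff.1 (Nat.support_factorization n ▸ hp))
  rw [Nat.multiplicative_factorization f hmul hone hn, Finsupp.prod, Nat.support_factorization,
    rhoL]
  split_ifs with hfull
  · rw [abs_prod]
    exact prod_le_one (fun _ _ => abs_nonneg _)
      fun p hp => hle p _ (Nat.prime_of_mem_primeFactors hp) (hpos p hp)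
  · simp only [isRFull_iff_le_factorization hn, not_forall, not_le] at hfull
    obtain ⟨p, hp, hlt⟩ := hfull
    rw [prod_eq_zero hp (hzero p _ (Nat.prime_of_mem_primeFactors hp) (hpos p hp) hlt), abs_zero]

section

variable (S : Set ℕ) [DecidablePred (· ∈ S)]

/-- `ρ_S` as an arithmetic function: forced to vanish at `0`, where `rho S 0` may be `1`. -/
def rhoArith : ArithmeticFunction ℤ :=
  ⟨fun n => if n = 0 then 0 else rho S n, if_pos rfl⟩

theorem rhoArith_apply {n : ℕ} (hn : n ≠ 0) : rhoArith S n = rho S n :=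
  if_neg hn

theorem muS_eq_rhoArith_mul_moebius (n : ℕ) :
    muS S n = (rhoArith S * (μ : ArithmeticFunction ℤ)) n := by
  rw [mul_apply, Nat.sum_divisorsAntidiagonal (f := fun x y => rhoArith S x * μ y), muS]
  exact sum_congr rfl fun d hd => by rw [rhoArith_apply S (Nat.pos_of_mem_divisors hd).ne']

theorem isMultiplicative_rhoArith (h1 : 1 ∈ S)
    (hmul : ∀ m n : ℕ, 0 < m → 0 < n → Nat.Coprime m n → (m * n ∈ S ↔ m ∈ S ∧ n ∈ S)) :
    (rhoArith S).IsMultiplicative := by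
  refine IsMultiplicative.iff_ne_zero.2 ⟨by simp [rhoArith_apply, rho, h1], fun hm hn hmn => ?_⟩
  rw [rhoArith_apply S (mul_ne_zero hm hn), rhoArith_apply S hm, rhoArith_apply S hn]
  simp only [rho, hmul _ _ (Nat.pos_of_ne_zero hm) (Nat.pos_of_ne_zero hn) hmn]
  split_ifs <;> simp_all

theorem muS_one (h1 : 1 ∈ S) : muS S 1 = 1 := by
  simp [muS, rho, h1]

theorem muS_mul_of_coprime (h1 : 1 ∈ S)
    (hmul : ∀ m n : ℕ, 0 < m → 0 < n → Nat.Coprime m n → (m * n ∈ S ↔ m ∈ S ∧ n ∈ S))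
    {m n : ℕ} (hmn : Nat.Coprime m n) : muS S (m * n) = muS S m * muS S n := by
  simp only [muS_eq_rhoArith_mul_moebius,
    ((isMultiplicative_rhoArith S h1 hmul).mul isMultiplicative_moebius).map_mul_of_coprime hmn]

theorem muS_prime_pow {p : ℕ} (hp : p.Prime) {a : ℕ} (ha : 1 ≤ a) :
    muS S (p ^ a) = rho S (p ^ a) - rho S (p ^ (a - 1)) := by
  obtain ⟨b, rfl⟩ := Nat.exists_eq_add_of_le' ha
  have hμ : ∀ i < b + 1, μ (p ^ (b + 1) / p ^ i) = if b + 1 - i = 1 then -1 else 0 := by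
    intro i hi
    rw [Nat.pow_div hi.le hp.pos, moebius_apply_prime_pow hp (by omega)]
  rw [muS, Nat.sum_divisors_prime_pow hp, sum_range_succ, sum_range_succ,
    sum_eq_zero fun i hi => ?_, hμ b (by omega), Nat.div_self (pow_pos hp.pos _)]
  · simp only [Nat.add_sub_cancel_left, Nat.add_sub_cancel, if_true, moebius_apply_one]
    ring
  · have hi := mem_range.1 hi
    rw [hμ i (by omega), if_neg (by omega), mul_zero]

theorem muS_prime_pow_eq_zero {p : ℕ} (hp : p.Prime) {a : ℕ} (ha : 1 ≤ a)
    (hmem : p ^ a ∈ S) (hmem' : p ^ (a - 1) ∈ S) : muS S (p ^ a) = 0 := by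
  simp [muS_prime_pow S hp ha, rho, hmem, hmem']

theorem abs_muS_prime_pow_le_one {p : ℕ} (hp : p.Prime) {a : ℕ} (ha : 1 ≤ a) :
    |muS S (p ^ a)| ≤ 1 := by
  rw [muS_prime_pow S hp ha, rho, rho]
  split_ifs <;> simp

end

theorem stmt16_general (S : Set ℕ) [DecidablePred (· ∈ S)] (r : ℕ)
    (h1 : 1 ∈ S)
    (hmul : ∀ m n : ℕ, 0 < m → 0 < n → Nat.Coprime m n → (m * n ∈ S ↔ m ∈ S ∧ n ∈ S))
    (hS : ∀ p a : ℕ, p.Prime → 1 ≤ a → a < r → p ^ a ∈ S) :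
    (∀ m n : ℕ, 0 < m → 0 < n → Nat.Coprime m n → muS S (m * n) = muS S m * muS S n) ∧
    (∀ p a : ℕ, p.Prime → 1 ≤ a → muS S (p ^ a) = rho S (p ^ a) - rho S (p ^ (a - 1))) ∧
    (∀ p a : ℕ, p.Prime → 1 ≤ a → a ≤ r - 1 → muS S (p ^ a) = 0) ∧
    (∀ n : ℕ, 0 < n → |muS S n| ≤ rhoL r n) := by
  have hzero : ∀ p a : ℕ, p.Prime → 1 ≤ a → a < r → muS S (p ^ a) = 0 := by
    intro p a hp ha har
    refine muS_prime_pow_eq_zero S hp ha (hS p a hp ha har) ?_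
    rcases Nat.eq_zero_or_pos (a - 1) with h | h
    · simpa [h] using h1
    · exact hS p _ hp h (by omega)
  have hmulS : ∀ m n : ℕ, Nat.Coprime m n → muS S (m * n) = muS S m * muS S n :=
    fun _ _ => muS_mul_of_coprime S h1 hmul
  exact ⟨fun m n _ _ => hmulS m n, fun p a hp ha => muS_prime_pow S hp ha,
    fun p a hp ha har => hzero p a hp ha (by omega),
    fun n hn => abs_le_rhoL_of_multiplicative hmulS (muS_one S h1)
      (fun p a hp ha => abs_muS_prime_pow_le_one S hp ha) hzero hn.ne'⟩

theorem stmt16 (S : Set ℕ) [DecidablePred (· ∈ S)] (r : ℕ) (hr : 2 ≤ r)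
    (h1 : 1 ∈ S)
    (hmul : ∀ m n : ℕ, 0 < m → 0 < n → Nat.Coprime m n → (m * n ∈ S ↔ m ∈ S ∧ n ∈ S))
    (hS : ∀ p a : ℕ, p.Prime → 1 ≤ a → a < r → p ^ a ∈ S) :
    (∀ m n : ℕ, 0 < m → 0 < n → Nat.Coprime m n → muS S (m * n) = muS S m * muS S n) ∧
    (∀ p a : ℕ, p.Prime → 1 ≤ a → muS S (p ^ a) = rho S (p ^ a) - rho S (p ^ (a - 1))) ∧
    (∀ p a : ℕ, p.Prime → 1 ≤ a → a ≤ r - 1 → muS S (p ^ a) = 0) ∧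
    (∀ n : ℕ, 0 < n → |muS S n| ≤ rhoL r n) :=
  stmt16_general S r h1 hmul hS
end

section
/- Let S ⊆ ℕ be completely multiplicative (1 ∈ S and ρ_S completely multiplicative) with #(S ∩ [1,x]) = Ax + O(1). Then for every positive integer ℓ, Σ_{n ≤ x, gcd(n,ℓ)=1} ρ_S(n) = A x ∏_{p | ℓ, p ∈ S} (1 − 1/p) + O(θ(ℓ)), uniformly in ℓ and x. -/
open Finset ArithmeticFunction UniqueFactorizationMonoid
open scoped ArithmeticFunction.Moebius ArithmeticFunction.zeta

theorem Nat.coprime_radical_iff {n l : ℕ} (hl : l ≠ 0) : n.Coprime (radical l) ↔ n.Coprime l :=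
  ⟨fun h => (h.pow_right l).coprime_dvd_right (Nat.dvd_radical_pow_self hl),
    fun h => h.coprime_dvd_right radical_dvd_self⟩

theorem Nat.card_divisors_of_squarefree {l : ℕ} (hl : Squarefree l) :
    #l.divisors = 2 ^ #l.primeFactors :=
  calc #l.divisors = ∑ d ∈ l.divisors, ζ d := by
        rw [card_eq_sum_ones]
        exact sum_congr rfl fun d hd => (zeta_apply_ne (Nat.pos_of_mem_divisors hd).ne').symm
    _ = ∏ p ∈ l.primeFactors, (1 + ζ p) :=
        (isMultiplicative_zeta.prodPrimeFactors_one_add_of_squarefree hl).symm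
    _ = 2 ^ #l.primeFactors := by
        rw [← prod_const]
        exact prod_congr rfl fun p hp => by
          rw [zeta_apply_ne (Nat.prime_of_mem_primeFactors hp).ne_zero]

namespace ArithmeticFunction

theorem sum_divisors_moebius {R : Type*} [Ring R] (n : ℕ) :
    ∑ d ∈ n.divisors, (μ d : R) = if n = 1 then 1 else 0 := by
  have h := congrArg (· n) (coe_moebius_mul_coe_zeta (R := R))
  simp only [coe_mul_zeta_apply, intCoe_apply, one_apply] at h
  exact h

theorem sum_filter_gcd_eq_one_eq_sum_moebius {R : Type*} [CommRing R] (s : Finset ℕ) (f : ℕ → R)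
    {l : ℕ} (hl : l ≠ 0) :
    ∑ n ∈ s with n.gcd l = 1, f n = ∑ d ∈ l.divisors, μ d * ∑ n ∈ s with d ∣ n, f n := by
  have hgcd (n : ℕ) : (n.gcd l).divisors = {d ∈ l.divisors | d ∣ n} := by
    rw [← Nat.divisors_filter_dvd_of_dvd hl (Nat.gcd_dvd_right n l)]
    ext d
    simp +contextual [Nat.dvd_gcd_iff]
  calc ∑ n ∈ s with n.gcd l = 1, f n
      = ∑ n ∈ s, (∑ d ∈ (n.gcd l).divisors, (μ d : R)) * f n := by
        rw [sum_filter]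
        refine sum_congr rfl fun n _ => ?_
        rw [sum_divisors_moebius]
        split_ifs <;> simp
    _ = ∑ d ∈ l.divisors, μ d * ∑ n ∈ s with d ∣ n, f n := by
        simp_rw [hgcd, sum_filter, sum_mul, mul_sum]
        rw [Finset.sum_comm]
        simp only [ite_mul, mul_ite, zero_mul, mul_zero]

end ArithmeticFunction

theorem sum_filter_dvd_Icc {M : Type*} [AddCommMonoid M] (f : ℕ → M) (N : ℕ) {d : ℕ} (hd : 0 < d) :
    ∑ n ∈ Icc 1 N with d ∣ n, f n = ∑ m ∈ Icc 1 (N / d), f (d * m) := by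
  refine (sum_nbij' (d * ·) (· / d) (fun m hm => ?_) (fun n hn => ?_) (fun m _ => ?_)
    (fun n hn => ?_) fun _ _ => rfl).symm
  · simp only [mem_filter, mem_Icc] at hm ⊢
    refine ⟨⟨Nat.mul_pos hd hm.1, ?_⟩, dvd_mul_right d m⟩
    rw [mul_comm]
    exact (Nat.le_div_iff_mul_le hd).1 hm.2
  · simp only [mem_filter, mem_Icc] at hn ⊢
    exact ⟨(Nat.one_le_div_iff hd).2 (Nat.le_of_dvd hn.1.1 hn.2), Nat.div_le_div_right hn.1.2⟩
  · exact Nat.mul_div_cancel_left m hd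
  · rw [mem_filter] at hn
    exact Nat.mul_div_cancel' hn.2

section CompletelyMultiplicative

variable {f : ℕ → ℝ}

noncomputable def divById (f : ℕ → ℝ) : ArithmeticFunction ℝ := ⟨fun d => f d / d, by simp⟩

theorem divById_apply (d : ℕ) : divById f d = f d / d := rfl

theorem isMultiplicative_divById (h1 : f 1 = 1)
    (hmul : ∀ m n, 0 < m → 0 < n → f (m * n) = f m * f n) : (divById f).IsMultiplicative := by
  refine IsMultiplicative.iff_ne_zero.2 ⟨by simp [divById_apply, h1], fun {m n} hm hn _ => ?_⟩
  simp only [divById_apply, hmul m n (Nat.pos_of_ne_zero hm) (Nat.pos_of_ne_zero hn),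
    Nat.cast_mul, mul_div_mul_comm]

theorem prod_one_sub_div_eq_sum_moebius (h1 : f 1 = 1)
    (hmul : ∀ m n, 0 < m → 0 < n → f (m * n) = f m * f n) {l : ℕ} (hl : Squarefree l) :
    ∏ p ∈ l.primeFactors, (1 - f p / p) = ∑ d ∈ l.divisors, μ d * (f d / d) :=
  (isMultiplicative_divById h1 hmul).prodPrimeFactors_one_sub_of_squarefree _ hl

theorem abs_sum_Icc_floor_sub_le_of_nonneg {A C : ℝ}
    (hf : ∀ y : ℝ, 1 ≤ y → |∑ m ∈ Icc 1 ⌊y⌋₊, f m - A * y| ≤ C) {y : ℝ} (hy : 0 ≤ y) :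
    |∑ m ∈ Icc 1 ⌊y⌋₊, f m - A * y| ≤ C + |A| := by
  rcases le_or_gt 1 y with hy1 | hy1
  · linarith [hf y hy1, abs_nonneg A]
  · have hC : 0 ≤ C := (abs_nonneg _).trans (hf 1 le_rfl)
    rw [Nat.floor_eq_zero.2 hy1, Icc_eq_empty_of_lt zero_lt_one, sum_empty, zero_sub, abs_neg,
      abs_mul, abs_of_nonneg hy]
    nlinarith [abs_nonneg A]

theorem abs_sum_coprime_sub_le_of_squarefree (h1 : f 1 = 1)
    (hmul : ∀ m n, 0 < m → 0 < n → f (m * n) = f m * f n) (hbound : ∀ n, |f n| ≤ 1) {A B : ℝ}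
    (hsum : ∀ y : ℝ, 0 ≤ y → |∑ m ∈ Icc 1 ⌊y⌋₊, f m - A * y| ≤ B) {x : ℝ} (hx : 0 ≤ x) {l : ℕ}
    (hl : Squarefree l) :
    |∑ n ∈ Icc 1 ⌊x⌋₊ with n.gcd l = 1, f n - A * x * ∏ p ∈ l.primeFactors, (1 - f p / p)|
      ≤ B * #l.divisors := by
  have hsplit : ∑ n ∈ Icc 1 ⌊x⌋₊ with n.gcd l = 1, f n - A * x * ∏ p ∈ l.primeFactors, (1 - f p / p)
      = ∑ d ∈ l.divisors, μ d * f d * (∑ m ∈ Icc 1 ⌊x / d⌋₊, f m - A * (x / d)) := by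
    rw [sum_filter_gcd_eq_one_eq_sum_moebius _ _ hl.ne_zero,
      prod_one_sub_div_eq_sum_moebius h1 hmul hl, mul_sum, ← sum_sub_distrib]
    refine sum_congr rfl fun d hd => ?_
    have hd : 0 < d := Nat.pos_of_mem_divisors hd
    rw [sum_filter_dvd_Icc _ _ hd, Nat.floor_div_natCast,
      sum_congr rfl fun m hm => hmul d m hd (mem_Icc.1 hm).1, ← mul_sum]
    ring
  rw [hsplit]
  calc _ ≤ ∑ d ∈ l.divisors, |μ d * f d * (∑ m ∈ Icc 1 ⌊x / d⌋₊, f m - A * (x / d))| :=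
        abs_sum_le_sum_abs _ _
    _ ≤ ∑ d ∈ l.divisors, B := sum_le_sum fun d _ => by
        have hμ : |(μ d : ℝ)| ≤ 1 := by exact_mod_cast abs_moebius_le_one
        rw [abs_mul, abs_mul]
        exact (mul_le_of_le_one_left (abs_nonneg _)
          (mul_le_one₀ hμ (abs_nonneg _) (hbound d))).trans (hsum _ (by positivity))
    _ = B * #l.divisors := by rw [sum_const, nsmul_eq_mul, mul_comm]

end CompletelyMultiplicative

section rhoR

variable {S : Set ℕ} [DecidablePred (· ∈ S)]

theorem rhoR_one (h1 : 1 ∈ S) : rhoR S 1 = 1 := if_pos h1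

theorem rhoR_mul (hcm : ∀ m n : ℕ, 0 < m → 0 < n → (m * n ∈ S ↔ m ∈ S ∧ n ∈ S))
    (m n : ℕ) (hm : 0 < m) (hn : 0 < n) : rhoR S (m * n) = rhoR S m * rhoR S n := by
  simp only [rhoR, hcm m n hm hn, ite_zero_mul_ite_zero, mul_one]

theorem abs_rhoR_le_one (n : ℕ) : |rhoR S n| ≤ 1 := by
  unfold rhoR
  split_ifs <;> simp

theorem sum_rhoR (s : Finset ℕ) : ∑ n ∈ s, rhoR S n = #{n ∈ s | n ∈ S} := by
  simp [rhoR, sum_boole]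

theorem prod_filter_mem_one_sub_one_div (s : Finset ℕ) :
    ∏ p ∈ s with p ∈ S, (1 - 1 / (p : ℝ)) = ∏ p ∈ s, (1 - rhoR S p / p) := by
  rw [prod_filter]
  exact prod_congr rfl fun p _ => by unfold rhoR; split_ifs <;> simp

end rhoR

theorem stmt18 (S : Set ℕ) [DecidablePred (· ∈ S)] (A : ℝ)
    (h1 : 1 ∈ S)
    (hcm : ∀ m n : ℕ, 0 < m → 0 < n → (m * n ∈ S ↔ m ∈ S ∧ n ∈ S))
    (hA : ∃ C0 : ℝ, ∀ x : ℝ, 1 ≤ x →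
      |(((Finset.Icc 1 ⌊x⌋₊).filter (· ∈ S)).card : ℝ) - A * x| ≤ C0) :
    ∃ C : ℝ, ∀ x : ℝ, 1 ≤ x → ∀ l : ℕ, 1 ≤ l →
      |(∑ n ∈ (Finset.Icc 1 ⌊x⌋₊).filter (fun n => Nat.gcd n l = 1), rhoR S n)
          - A * x * ∏ p ∈ l.primeFactors.filter (· ∈ S), (1 - 1 / (p : ℝ))|
        ≤ C * (theta l : ℝ) := by
  obtain ⟨C0, hC0⟩ := hA
  simp_rw [← sum_rhoR] at hC0
  refine ⟨C0 + |A|, fun x hx l hl => ?_⟩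
  have hrad := abs_sum_coprime_sub_le_of_squarefree (rhoR_one h1) (rhoR_mul hcm) abs_rhoR_le_one
    (fun y hy => abs_sum_Icc_floor_sub_le_of_nonneg hC0 hy) (by linarith)
    (squarefree_radical (a := l))
  have hcop (n : ℕ) : n.gcd (radical l) = 1 ↔ n.gcd l = 1 := Nat.coprime_radical_iff (by omega)
  rw [Nat.card_divisors_of_squarefree squarefree_radical, Nat.primeFactors_radical,
    filter_congr fun n _ => hcop n] at hrad
  rw [prod_filter_mem_one_sub_one_div, theta]
  exact_mod_cast hrad
end
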